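/- For symmetric positive definite matrices A, B, X, Y of the same size, δ_T(X+A, Y+B) ≤ max{δ_T(X,Y), δ_T(A,B)}, where δ_T is the Thompson metric. -/

import Mathlib

open Matrix Filter

variable {n : ℕ}

/-- Largest (real) eigenvalue: supremum of the real spectrum. -/
noncomputable def maxEig (M : Matrix (Fin n) (Fin n) ℝ) : ℝ := sSup (spectrum ℝ M)

/-- Smallest (real) eigenvalue: infimum of the real spectrum. -/
noncomputable def minEig (M : Matrix (Fin n) (Fin n) ℝ) : ℝ := sInf (spectrum ℝ M)

/-- Thompson metric via the spectral formula
`δ_T(M,N) = max {log λ_max(M⁻¹N), log λ_max(N⁻¹M)}`. -/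
noncomputable def deltaT (X Y : Matrix (Fin n) (Fin n) ℝ) : ℝ :=
  max (Real.log (maxEig (X⁻¹ * Y))) (Real.log (maxEig (Y⁻¹ * X)))

/-- Spectral (ℓ²-operator) norm of a matrix. -/
noncomputable def sNorm (M : Matrix (Fin n) (Fin n) ℝ) : ℝ :=
  ‖Matrix.toEuclideanCLM (𝕜 := ℝ) M‖

open Classical in
/-- The unique positive semidefinite square root (junk value `1` off PSD matrices). -/
noncomputable def sqrtM (M : Matrix (Fin n) (Fin n) ℝ) : Matrix (Fin n) (Fin n) ℝ :=
  if h : M.PosSemidef then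
    (h.1.eigenvectorUnitary : Matrix (Fin n) (Fin n) ℝ) *
      diagonal ((↑) ∘ (√·) ∘ h.1.eigenvalues) *
      (star (h.1.eigenvectorUnitary : Matrix (Fin n) (Fin n) ℝ))
  else 1

/-- Matrix logarithm via the continuous functional calculus. -/
noncomputable def mlog (M : Matrix (Fin n) (Fin n) ℝ) : Matrix (Fin n) (Fin n) ℝ :=
  cfc Real.log M

/-- Loewner order: `A ⪯ B` iff `B - A` is positive semidefinite. -/
def loewner (A B : Matrix (Fin n) (Fin n) ℝ) : Prop := (B - A).PosSemidef

/-!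
The Thompson distance is a Loewner-order quantity: for positive definite `P`, `Q`,
`δ_T(P, Q) ≤ t` iff `Q ≤ eᵗ P` and `P ≤ eᵗ Q`. Indeed `P⁻¹ Q` is similar to the Hermitian
matrix `P^{-1/2} Q P^{-1/2}`, whose largest eigenvalue is at most `c` iff
`P^{-1/2} Q P^{-1/2} ≤ c`, i.e. iff `Q ≤ c P`. Both Loewner inequalities are preserved
under adding the corresponding inequalities for `A`, `B`.
-/

open scoped MatrixOrder ComplexOrder

section conjugation

variable {𝕜 ι : Type*} [RCLike 𝕜] [Fintype ι] [DecidableEq ι]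

lemma conj_le_conj_iff {R Q S : Matrix ι ι 𝕜} (hR : IsUnit R) (hR' : R.IsHermitian) :
    R * Q * R ≤ R * S * R ↔ Q ≤ S := by
  have := hR.posSemidef_star_right_conjugate_iff (x := S - Q)
  rwa [star_eq_conjTranspose, hR'.eq, Matrix.mul_sub, Matrix.sub_mul, ← le_iff, ← le_iff] at this

lemma spectrum_mul_self_inv_mul {R : Matrix ι ι 𝕜} (hR : IsUnit R) (Q : Matrix ι ι 𝕜) :
    spectrum 𝕜 ((R * R)⁻¹ * Q) = spectrum 𝕜 (R⁻¹ * Q * R⁻¹) := by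
  obtain ⟨u, rfl⟩ := hR
  conv_rhs => rw [← spectrum.units_conjugate' (u := u), Matrix.coe_units_inv]
  simp [Matrix.mul_inv_rev, Matrix.mul_assoc]

end conjugation

lemma maxEig_le_iff_le_algebraMap [NeZero n] {M : Matrix (Fin n) (Fin n) ℝ} (hM : M.IsHermitian)
    {c : ℝ} : maxEig M ≤ c ↔ M ≤ algebraMap ℝ _ c := by
  have hne : (spectrum ℝ M).Nonempty := ContinuousFunctionalCalculus.spectrum_nonempty M hM
  rw [maxEig, csSup_le_iff M.finite_spectrum.bddAbove hne]
  exact (le_algebraMap_iff_spectrum_le hM.isSelfAdjoint).symm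

lemma maxEig_inv_mul_le_iff [NeZero n] {P Q : Matrix (Fin n) (Fin n) ℝ} (hP : P.PosDef)
    (hQ : Q.IsHermitian) {c : ℝ} : maxEig (P⁻¹ * Q) ≤ c ↔ Q ≤ c • P := by
  obtain ⟨R, rfl, hR, hR'⟩ : ∃ R, R * R = P ∧ IsUnit R ∧ R.IsHermitian :=
    ⟨CFC.sqrt P, CFC.sqrt_mul_sqrt_self P,
      CFC.isUnit_sqrt_iff_isStrictlyPositive.mpr hP.isStrictlyPositive,
      (CFC.sqrt_nonneg P).isSelfAdjoint⟩
  have hdet : IsUnit R.det := (isUnit_iff_isUnit_det R).mp hR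
  have hRinv : R⁻¹ * (R * R) * R⁻¹ = 1 := by
    rw [Matrix.mul_assoc, Matrix.mul_assoc, mul_nonsing_inv _ hdet, Matrix.mul_one,
      nonsing_inv_mul _ hdet]
  have hM : (R⁻¹ * Q * R⁻¹).IsHermitian := by
    simpa only [hR'.inv.eq] using isHermitian_mul_mul_conjTranspose R⁻¹ hQ
  rw [maxEig, spectrum_mul_self_inv_mul hR, ← maxEig, maxEig_le_iff_le_algebraMap hM,
    Algebra.algebraMap_eq_smul_one, ← hRinv, ← smul_mul_assoc, ← mul_smul_comm,
    conj_le_conj_iff (isUnit_nonsing_inv_iff.mpr hR) hR'.inv]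

lemma maxEig_inv_mul_pos [NeZero n] {P Q : Matrix (Fin n) (Fin n) ℝ} (hP : P.PosDef)
    (hQ : Q.PosDef) : 0 < maxEig (P⁻¹ * Q) := by
  by_contra! h
  rw [maxEig_inv_mul_le_iff hP hQ.1, zero_smul] at h
  have hQ0 : Q = 0 := le_antisymm h hQ.posSemidef.nonneg
  exact not_isUnit_zero (hQ0 ▸ hQ.isStrictlyPositive.isUnit)

lemma log_maxEig_inv_mul_le_iff [NeZero n] {P Q : Matrix (Fin n) (Fin n) ℝ} (hP : P.PosDef)
    (hQ : Q.PosDef) {t : ℝ} : Real.log (maxEig (P⁻¹ * Q)) ≤ t ↔ Q ≤ Real.exp t • P := by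
  rw [Real.log_le_iff_le_exp (maxEig_inv_mul_pos hP hQ), maxEig_inv_mul_le_iff hP hQ.1]

lemma deltaT_le_iff [NeZero n] {P Q : Matrix (Fin n) (Fin n) ℝ} (hP : P.PosDef) (hQ : Q.PosDef)
    {t : ℝ} : deltaT P Q ≤ t ↔ Q ≤ Real.exp t • P ∧ P ≤ Real.exp t • Q := by
  rw [deltaT, max_le_iff, log_maxEig_inv_mul_le_iff hP hQ, log_maxEig_inv_mul_le_iff hQ hP]

-- The spectrum of a `0 × 0` matrix is empty, and `Real.log (sSup ∅) = Real.log 0 = 0`.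
lemma deltaT_fin_zero (X Y : Matrix (Fin 0) (Fin 0) ℝ) : deltaT X Y = 0 := by
  simp [deltaT, maxEig, spectrum.of_subsingleton]

theorem stmt3 (A B X Y : Matrix (Fin n) (Fin n) ℝ)
    (hA : A.PosDef) (hB : B.PosDef) (hX : X.PosDef) (hY : Y.PosDef) :
    deltaT (X + A) (Y + B) ≤ max (deltaT X Y) (deltaT A B) := by
  cases n with
  | zero => simp [deltaT_fin_zero]
  | succ n =>
    obtain ⟨hXY, hYX⟩ := (deltaT_le_iff hX hY).1 (le_max_left _ (deltaT A B))
    obtain ⟨hAB, hBA⟩ := (deltaT_le_iff hA hB).1 (le_max_right (deltaT X Y) _)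
    rw [deltaT_le_iff (hX.add hA) (hY.add hB), smul_add, smul_add]
    exact ⟨add_le_add hXY hAB, add_le_add hYX hBA⟩
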